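/- Theorem 2 (FESL-s regret bound). Let T₂ ≥ 3 and set δ = 1/(T₂ − 1) and η = √((8/T₂)(2 ln 2 + (T₂ − 1) H(1/(T₂ − 1)))). Then the expected cumulative loss of the fixed-share forecaster satisfies Σ_{t=1}^{T₂} ℓ̄_t ≤ min_{0 ≤ s ≤ T₂} L^s + √((T₂/2)(2 ln 2 + H(δ)/δ)), where L^s = Σ_{t=1}^{s} ℓ_{1,t} + Σ_{t=s+1}^{T₂} ℓ_{2,t} is the cumulative loss of following expert 1 up to round s and expert 2 afterwards, and H(x) = −x ln x − (1−x) ln(1−x) is the binary entropy function. -/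

import Mathlib

/-!
Exponential-weights potential argument on the total weight `W t = ∑ i, α i t`. Fixed sharing
preserves total mass, so `W (t + 1) = ∑ i, α i t * exp (-η * l i (t + 1))`, and Hoeffding's lemma
for the distribution `α · t / W t` gives `log W (t + 1) ≤ log W t - η ℓ̄_{t+1} + η² / 8`.
Conversely `W T` dominates the weight carried along the comparator's path: staying with an expert
multiplies it by at least `(1 - δ) e^{-ηℓ}`, switching by at least `(δ / N) e^{-ηℓ}`, so with at
most one switch `W T ≥ δ / N² (1 - δ)^(T-2) e^{-η L^s}`. Comparing the two bounds,
`∑ ℓ̄ ≤ L^s + C / η + T η / 8` with `C = log (N² / δ) - (T - 2) log (1 - δ)`, which for `N = 2` and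
`δ = 1 / (T - 1)` equals `2 log 2 + H(δ) / δ`; the given `η` minimises the right-hand side.
-/

open Real Finset ProbabilityTheory MeasureTheory

/-- Hoeffding's lemma for a distribution on a finite type. -/
theorem log_sum_mul_exp_le {ι : Type*} [Fintype ι] {p x : ι → ℝ} {a b : ℝ}
    (hp : ∀ i, 0 ≤ p i) (hp1 : ∑ i, p i = 1) (hx : ∀ i, x i ∈ Set.Icc a b) (t : ℝ) :
    log (∑ i, p i * exp (t * x i)) ≤ t * ∑ i, p i * x i + (b - a) ^ 2 * t ^ 2 / 8 := by
  let _ : MeasurableSpace ι := ⊤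
  let μ := (PMF.ofFintype (fun i ↦ ENNReal.ofReal (p i)) (by
    rw [← ENNReal.ofReal_sum_of_nonneg fun i _ ↦ hp i, hp1, ENNReal.ofReal_one])).toMeasure
  have hint (f : ι → ℝ) : ∫ i, f i ∂μ = ∑ i, p i * f i := by
    simp [μ, PMF.integral_eq_sum, ENNReal.toReal_ofReal (hp _)]
  have hpos : 0 < ∑ i, p i * exp (t * x i) := by
    rw [← hint]
    exact mgf_pos (.of_finite)
  have hmgf := (hasSubgaussianMGF_of_mem_Icc (μ := μ) (measurable_of_finite x).aemeasurable
    (.of_forall hx)).mgf_le t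
  rw [mgf, hint, hint] at hmgf
  simp only [mul_sub, exp_sub, ← mul_div_assoc, ← sum_div] at hmgf
  rw [div_le_iff₀ (exp_pos _), ← exp_add, ← log_le_iff_le_exp hpos] at hmgf
  convert hmgf using 1
  simp only [NNReal.coe_pow, NNReal.coe_div, coe_nnnorm, norm_eq_abs, NNReal.coe_ofNat, div_pow,
    sq_abs]
  ring

theorem log_sum_mul_exp_le_log_sum {ι : Type*} [Fintype ι] {w x : ι → ℝ} {a b : ℝ}
    (hw : ∀ i, 0 ≤ w i) (hW : 0 < ∑ i, w i) (hx : ∀ i, x i ∈ Set.Icc a b) (t : ℝ) :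
    log (∑ i, w i * exp (t * x i))
      ≤ log (∑ i, w i) + t * ((∑ i, w i * x i) / ∑ i, w i) + (b - a) ^ 2 * t ^ 2 / 8 := by
  have hp1 : ∑ i, w i / ∑ j, w j = 1 := by rw [← sum_div, div_self hW.ne']
  have := log_sum_mul_exp_le (fun i ↦ div_nonneg (hw i) hW.le) hp1 hx t
  simp only [div_mul_eq_mul_div, ← sum_div] at this
  have hpos : 0 < ∑ i, w i * exp (t * x i) := by
    obtain ⟨i, -, hi⟩ :=
      exists_lt_of_sum_lt (s := univ) (f := fun _ ↦ 0) (g := w) (by simpa using hW)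
    exact sum_pos' (fun j _ ↦ mul_nonneg (hw j) (exp_pos _).le)
      ⟨i, mem_univ i, mul_pos hi (exp_pos _)⟩
  rw [log_div hpos.ne' hW.ne'] at this
  linarith

/-- `η = √(8C/T)` is the minimiser of `η ↦ C / η + T η / 8`. -/
theorem div_add_mul_div_eight_eq_sqrt {C T η : ℝ} (hC : 0 < C) (hT : 0 < T)
    (hη : η = √(8 / T * C)) :
    C / η + T * η / 8 = √(T / 2 * C) := by
  have hη0 : 0 < η := hη ▸ by positivity
  have hη2 : T * η ^ 2 = 8 * C := by
    rw [hη, sq_sqrt (by positivity)]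
    field_simp
  have h2C : C / η + T * η / 8 = 2 * C / η := by
    field_simp
    linear_combination hη2
  rw [h2C, eq_comm, sqrt_eq_iff_eq_sq (by positivity) (by positivity)]
  field_simp
  linear_combination hη2

section FixedShare

variable {ι : Type*} [Fintype ι]

noncomputable def fixedShare (δ : ℝ) (w : ι → ℝ) (i : ι) : ℝ :=
  δ * (∑ j, w j) / Fintype.card ι + (1 - δ) * w i

theorem sum_fixedShare [Nonempty ι] (δ : ℝ) (w : ι → ℝ) :
    ∑ i, fixedShare δ w i = ∑ i, w i := by
  have : (Fintype.card ι : ℝ) ≠ 0 := Nat.cast_ne_zero.2 Fintype.card_ne_zero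
  simp only [fixedShare, sum_add_distrib, sum_const, card_univ, nsmul_eq_mul, ← mul_sum]
  field_simp
  ring

variable {δ : ℝ} {w : ι → ℝ}

theorem one_sub_mul_le_fixedShare (hδ : 0 ≤ δ) (hw : ∀ j, 0 ≤ w j) (i : ι) :
    (1 - δ) * w i ≤ fixedShare δ w i :=
  le_add_of_nonneg_left (by have := sum_nonneg fun j (_ : j ∈ univ) ↦ hw j; positivity)

theorem div_card_mul_le_fixedShare (hδ0 : 0 ≤ δ) (hδ1 : δ ≤ 1) (hw : ∀ j, 0 ≤ w j) (i j : ι) :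
    δ / Fintype.card ι * w j ≤ fixedShare δ w i := by
  have hj : w j ≤ ∑ k, w k := single_le_sum (fun k _ ↦ hw k) (mem_univ j)
  rw [div_mul_eq_mul_div]
  exact le_add_of_le_of_nonneg (by gcongr) (mul_nonneg (by linarith) (hw i))

end FixedShare

def IsFixedShareWeights {ι : Type*} [Fintype ι] (η δ : ℝ) (l α : ι → ℕ → ℝ) : Prop :=
  ∀ i t, α i (t + 1) = fixedShare δ (fun j ↦ α j t * exp (-η * l j (t + 1))) i

/-- `α i t` is the weight after round `t`, so round `t` is played with `α · (t - 1)`. -/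
noncomputable def expectedLoss {ι : Type*} [Fintype ι] (α l : ι → ℕ → ℝ) (t : ℕ) : ℝ :=
  (∑ i, α i (t - 1) * l i t) / ∑ i, α i (t - 1)

theorem log_add_log_sub_mul_le_log {c a η x b : ℝ} (hc : 0 < c) (ha : 0 < a)
    (h : c * (a * exp (-η * x)) ≤ b) : log c + log a - η * x ≤ log b := by
  have := log_le_log (by positivity) h
  rw [log_mul hc.ne' (by positivity), log_mul ha.ne' (exp_pos _).ne', log_exp] at this
  linarith

namespace IsFixedShareWeights

variable {ι : Type*} [Fintype ι] {η δ : ℝ} {l α : ι → ℕ → ℝ}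

theorem sum_succ [Nonempty ι] (h : IsFixedShareWeights η δ l α) (t : ℕ) :
    ∑ i, α i (t + 1) = ∑ i, α i t * exp (-η * l i (t + 1)) := by
  simp_rw [h _ t]
  exact sum_fixedShare _ _

theorem pos (h : IsFixedShareWeights η δ l α) (hδ0 : 0 ≤ δ) (hδ1 : δ < 1)
    (h0 : ∀ i, 0 < α i 0) (i : ι) (t : ℕ) : 0 < α i t := by
  induction t generalizing i with
  | zero => exact h0 i
  | succ t ih =>
    rw [h]
    exact (mul_pos (sub_pos.2 hδ1) (mul_pos (ih i) (exp_pos _))).trans_le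
      (one_sub_mul_le_fixedShare hδ0 (fun j ↦ (mul_pos (ih j) (exp_pos _)).le) i)

theorem log_stay_step (h : IsFixedShareWeights η δ l α) (hα : ∀ i t, 0 < α i t)
    (hδ0 : 0 ≤ δ) (hδ1 : δ < 1) (i : ι) (t : ℕ) :
    log (1 - δ) + log (α i t) - η * l i (t + 1) ≤ log (α i (t + 1)) :=
  log_add_log_sub_mul_le_log (sub_pos.2 hδ1) (hα i t) <| (h i t).symm ▸
    one_sub_mul_le_fixedShare hδ0 (fun j ↦ (mul_pos (hα j t) (exp_pos (-η * l j (t + 1)))).le) i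

theorem log_switch_step [Nonempty ι] (h : IsFixedShareWeights η δ l α) (hα : ∀ i t, 0 < α i t)
    (hδ0 : 0 < δ) (hδ1 : δ ≤ 1) (i j : ι) (t : ℕ) :
    log (δ / Fintype.card ι) + log (α j t) - η * l j (t + 1) ≤ log (α i (t + 1)) :=
  log_add_log_sub_mul_le_log (div_pos hδ0 (Nat.cast_pos.2 Fintype.card_pos)) (hα j t) <|
    (h i t).symm ▸ div_card_mul_le_fixedShare hδ0.le hδ1
      (fun k ↦ (mul_pos (hα k t) (exp_pos (-η * l k (t + 1)))).le) i j

theorem log_le_log_sum_succ [Nonempty ι] (h : IsFixedShareWeights η δ l α)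
    (hα : ∀ i t, 0 < α i t) (j : ι) (t : ℕ) :
    log (α j t) - η * l j (t + 1) ≤ log (∑ i, α i (t + 1)) := by
  simpa using log_add_log_sub_mul_le_log one_pos (hα j t) <| by
    rw [one_mul, h.sum_succ]
    exact single_le_sum (fun k _ ↦ (mul_pos (hα k t) (exp_pos (-η * l k (t + 1)))).le)
      (mem_univ j)

theorem log_stay (h : IsFixedShareWeights η δ l α) (hα : ∀ i t, 0 < α i t)
    (hδ0 : 0 ≤ δ) (hδ1 : δ < 1) (i : ι) (s k : ℕ) :
    log (α i s) + k * log (1 - δ) - η * ∑ u ∈ Icc (s + 1) (s + k), l i u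
      ≤ log (α i (s + k)) := by
  induction k with
  | zero => simp
  | succ k ih =>
    have := h.log_stay_step hα hδ0 hδ1 i (s + k)
    rw [← add_assoc, sum_Icc_succ_top (by omega)]
    push_cast
    linarith

theorem log_stay_le_log_sum [Nonempty ι] (h : IsFixedShareWeights η δ l α)
    (hα : ∀ i t, 0 < α i t) (hδ0 : 0 ≤ δ) (hδ1 : δ < 1) (j : ι) (s k : ℕ) :
    log (α j s) + k * log (1 - δ) - η * ∑ u ∈ Icc (s + 1) (s + k + 1), l j u
      ≤ log (∑ i, α i (s + k + 1)) := by
  have := h.log_stay hα hδ0 hδ1 j s k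
  have := h.log_le_log_sum_succ hα j (s + k)
  rw [sum_Icc_succ_top (by omega)]
  linarith

theorem log_switching_le_log_sum [Nonempty ι] (h : IsFixedShareWeights η δ l α)
    (hα : ∀ i t, 0 < α i t) (hα0 : ∀ i, α i 0 = (Fintype.card ι : ℝ)⁻¹) (hδ0 : 0 < δ)
    (hδ : δ / Fintype.card ι ≤ 1 - δ) {s T : ℕ} (hs : s ≤ T) (hT : 2 ≤ T) (i j : ι) :
    log (δ / Fintype.card ι ^ 2) + (T - 2) * log (1 - δ)
        - η * (∑ u ∈ Icc 1 s, l i u + ∑ u ∈ Icc (s + 1) T, l j u)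
      ≤ log (∑ k, α k T) := by
  have hN : (0 : ℝ) < Fintype.card ι := Nat.cast_pos.2 Fintype.card_pos
  have hδN : 0 < δ / Fintype.card ι := div_pos hδ0 hN
  have hδ1 : δ < 1 := by linarith
  have hlog_α0 (k : ι) : log (α k 0) = -log (Fintype.card ι) := by rw [hα0, log_inv]
  have hlog_δ :
      log (δ / Fintype.card ι ^ 2) = log (δ / Fintype.card ι) - log (Fintype.card ι) := by
    rw [sq, ← div_div, log_div hδN.ne' hN.ne']
  -- the paths without a switch (`s = 0` or `s = T`) pay `1 - δ` where a switch pays `δ / N`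
  have hswitch_le_stay : log (δ / Fintype.card ι) ≤ log (1 - δ) := log_le_log hδN hδ
  obtain rfl | hs0 := Nat.eq_zero_or_pos s
  · obtain ⟨m, rfl⟩ : ∃ m, T = 0 + m + 1 := ⟨T - 1, by omega⟩
    have := h.log_stay_le_log_sum hα hδ0.le hδ1 j 0 m
    simp only [Icc_eq_empty_of_lt zero_lt_one, sum_empty, zero_add] at this ⊢
    push_cast
    linarith [hlog_α0 j]
  obtain rfl | hsT := eq_or_lt_of_le hs
  · obtain ⟨m, rfl⟩ : ∃ m, s = 0 + m + 1 := ⟨s - 1, by omega⟩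
    have := h.log_stay_le_log_sum hα hδ0.le hδ1 i 0 m
    simp only [Icc_eq_empty_of_lt (Nat.lt_succ_self _), sum_empty, add_zero, zero_add] at this ⊢
    push_cast
    linarith [hlog_α0 i]
  obtain ⟨q, rfl⟩ : ∃ q, s = q + 1 := ⟨s - 1, by omega⟩
  obtain ⟨r, rfl⟩ : ∃ r, T = q + 1 + r + 1 := ⟨T - q - 2, by omega⟩
  have h1 := h.log_stay hα hδ0.le hδ1 i 0 q
  have h2 := h.log_switch_step hα hδ0 hδ1.le j i q
  have h3 := h.log_stay_le_log_sum hα hδ0.le hδ1 j (q + 1) r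
  simp only [zero_add] at h1
  rw [sum_Icc_succ_top (by omega)]
  push_cast
  linarith [hlog_α0 i]

theorem log_sum_le [Nonempty ι] (h : IsFixedShareWeights η δ l α) (hα : ∀ i t, 0 < α i t)
    (hl : ∀ i t, l i t ∈ Set.Icc 0 1) (T : ℕ) :
    log (∑ i, α i T)
      ≤ log (∑ i, α i 0) - η * ∑ t ∈ Icc 1 T, expectedLoss α l t + T * η ^ 2 / 8 := by
  induction T with
  | zero => simp
  | succ T ih =>
    have hstep := log_sum_mul_exp_le_log_sum (fun i ↦ (hα i T).le)
      (sum_pos (fun i _ ↦ hα i T) univ_nonempty) (fun i ↦ hl i (T + 1)) (-η)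
    rw [← h.sum_succ] at hstep
    simp only [sub_zero, one_pow, one_mul, neg_sq] at hstep
    rw [sum_Icc_succ_top (by omega), expectedLoss, Nat.add_sub_cancel]
    push_cast
    linarith

theorem sum_expectedLoss_le [Nonempty ι] (h : IsFixedShareWeights η δ l α)
    (hα0 : ∀ i, α i 0 = (Fintype.card ι : ℝ)⁻¹) (hl : ∀ i t, l i t ∈ Set.Icc 0 1) (hδ0 : 0 < δ)
    (hδ : δ / Fintype.card ι ≤ 1 - δ) (hη : 0 < η) {s T : ℕ} (hs : s ≤ T) (hT : 2 ≤ T)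
    (i j : ι) :
    ∑ t ∈ Icc 1 T, expectedLoss α l t
      ≤ ∑ u ∈ Icc 1 s, l i u + ∑ u ∈ Icc (s + 1) T, l j u
        + (-log (δ / Fintype.card ι ^ 2) - (T - 2) * log (1 - δ)) / η + T * η / 8 := by
  have hN : (0 : ℝ) < Fintype.card ι := Nat.cast_pos.2 Fintype.card_pos
  have hδ1 : δ < 1 := by linarith [div_pos hδ0 hN]
  have hα := h.pos hδ0.le hδ1 (fun k ↦ hα0 k ▸ inv_pos.2 hN)
  have hW0 : log (∑ i, α i 0) = 0 := by simp [hα0]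
  have hlower := h.log_switching_le_log_sum hα hα0 hδ0 hδ hs hT i j
  have hupper := h.log_sum_le hα hl T
  refine le_of_mul_le_mul_left ?_ hη
  field_simp
  linarith

end IsFixedShareWeights

theorem binEntropy_div_self {p : ℝ} (hp : p ≠ 0) :
    binEntropy p / p = -log p - (1 / p - 1) * log (1 - p) := by
  rw [binEntropy, log_inv, log_inv]
  field_simp
  ring

/-- **Theorem 2 (FESL-s regret bound).** For `T₂ ≥ 3`, with
`δ = 1/(T₂−1)` and `η = √((8/T₂)(2 ln 2 + (T₂−1) H(1/(T₂−1))))`, the expected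
cumulative loss of the fixed-share forecaster satisfies
`Σ_{t=1}^{T₂} ℓ̄_t ≤ min_{0 ≤ s ≤ T₂} L^s + √((T₂/2)(2 ln 2 + H(δ)/δ))`,
where `L^s = Σ_{t≤s} ℓ_{1,t} + Σ_{t>s} ℓ_{2,t}` and `H` is the binary
entropy function. -/
theorem fesl_s_regret_bound
    (T : ℕ) (hT : 3 ≤ T)
    (H : ℝ → ℝ)
    (hH : ∀ x : ℝ, H x = -x * Real.log x - (1 - x) * Real.log (1 - x))
    (δ η : ℝ)
    (hδ : δ = 1 / ((T : ℝ) - 1))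
    (hη : η = Real.sqrt (8 / (T : ℝ) *
      (2 * Real.log 2 + ((T : ℝ) - 1) * H (1 / ((T : ℝ) - 1)))))
    (l : Fin 2 → ℕ → ℝ) (hl : ∀ i t, l i t ∈ Set.Icc (0 : ℝ) 1)
    (α v : Fin 2 → ℕ → ℝ)
    (hα0 : ∀ i, α i 0 = 1 / 2)
    (hv : ∀ i t, 1 ≤ t → v i t = α i (t - 1) * Real.exp (-η * l i t))
    (hαt : ∀ i t, 1 ≤ t → α i t = δ * (v 0 t + v 1 t) / 2 + (1 - δ) * v i t) :
    ∑ t ∈ Finset.Icc 1 T,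
        (α 0 (t - 1) * l 0 t + α 1 (t - 1) * l 1 t) / (α 0 (t - 1) + α 1 (t - 1))
      ≤ (Finset.Icc 0 T).inf' (Finset.nonempty_Icc.mpr (Nat.zero_le T))
          (fun s => (∑ t ∈ Finset.Icc 1 s, l 0 t) + ∑ t ∈ Finset.Icc (s + 1) T, l 1 t)
        + Real.sqrt ((T : ℝ) / 2 * (2 * Real.log 2 + H δ / δ)) := by
  have hH_eq : H = binEntropy :=
    funext fun x ↦ by rw [hH, binEntropy, log_inv, log_inv]; ring
  subst hH_eq
  have hT' : (3 : ℝ) ≤ T := by exact_mod_cast hT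
  have hδ_inv : 1 / δ = T - 1 := by rw [hδ, one_div_one_div]
  have hδ0 : 0 < δ := by rw [hδ]; exact one_div_pos.2 (by linarith)
  have hδ1 : δ / 2 ≤ 1 - δ := by
    have : δ ≤ 1 / 2 := hδ ▸ one_div_le_one_div_of_le two_pos (by linarith)
    linarith
  have hC : -log (δ / 2 ^ 2) - (T - 2) * log (1 - δ) = 2 * log 2 + binEntropy δ / δ := by
    rw [binEntropy_div_self hδ0.ne', hδ_inv, log_div hδ0.ne' (by norm_num), log_pow]
    push_cast
    ring
  have hC0 : 0 < 2 * log 2 + binEntropy δ / δ := by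
    have := binEntropy_nonneg hδ0.le (by linarith)
    have := log_pos one_lt_two
    positivity
  have hηC : η = √(8 / T * (2 * log 2 + binEntropy δ / δ)) := by
    rw [hη, ← hδ, ← hδ_inv, one_div_mul_eq_div]
  have hweights : IsFixedShareWeights η δ l α := fun i t ↦ by
    simp only [hαt i (t + 1) (by omega), hv _ (t + 1) (by omega), fixedShare, Fin.sum_univ_two,
      Fintype.card_fin, Nat.add_sub_cancel]
    push_cast
    ring
  have hbound (s : ℕ) (hs : s ∈ Icc 0 T) := hweights.sum_expectedLoss_le (by simp [hα0]) hl hδ0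
    (by simpa using hδ1) (hηC ▸ by positivity) (mem_Icc.1 hs).2 (by omega) 0 1
  simp only [expectedLoss, Fin.sum_univ_two, Fintype.card_fin, Nat.cast_ofNat, hC] at hbound
  rw [← div_add_mul_div_eight_eq_sqrt hC0 (by positivity) hηC]
  refine sub_le_iff_le_add.1 (le_inf' _ _ fun s hs ↦ ?_)
  linarith [hbound s hs]
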